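/- The lattice ℰ^N satisfies the Jordan–Dedekind chain condition (all maximal chains between two comparable elements have the same length), and its rank function r : ℰ^N → ℤ_+ is given by r(A,P) = (n − |P|) + min{|A|,1}, i.e., r(A,P) = n − |P| if A = ∅ and r(A,P) = n − |P| + 1 if A ≠ ∅, where |P| is the number of blocks of the partition P. -/

import Mathlib

open scoped BigOperators

/-- `modp n A` is the modular partition `P^A_⊥` of `Fin n` whose unique (possibly)
non-singleton block is `A`, all other blocks being singletons. -/
def modp (n : ℕ) (A : Set (Fin n)) : Setoid (Fin n) where
  r x y := x = y ∨ (x ∈ A ∧ y ∈ A)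
  iseqv := by
    refine ⟨fun _ => Or.inl rfl, ?_, ?_⟩
    · rintro x y (rfl | ⟨hx, hy⟩)
      · exact Or.inl rfl
      · exact Or.inr ⟨hy, hx⟩
    · rintro x y z (rfl | ⟨hx, hy⟩) h
      · exact h
      · rcases h with rfl | ⟨hy', hz⟩
        · exact Or.inr ⟨hx, hy⟩
        · exact Or.inr ⟨hx, hz⟩

/-- The product `X^N = 2^N × 𝒫^N` of the subset lattice and the partition lattice,
ordered componentwise. -/
abbrev XN (n : ℕ) := Set (Fin n) × Setoid (Fin n)

/-- The closure operator `cl` on `X^N`:  `cl(∅,P) = (∅,P)` and, for `A ≠ ∅`,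
`cl(A,P) = (Ā, P ⊔ P^A_⊥)` where `Ā` is the block of `P ⊔ P^A_⊥` containing `A`. -/
def EmbClosure (n : ℕ) (x : XN n) : XN n :=
  ({y | ∃ a ∈ x.1, (x.2 ⊔ modp n x.1) y a}, x.2 ⊔ modp n x.1)

/-- An embedded subset is a pair that coincides with its closure. -/
def IsEmbedded (n : ℕ) (x : XN n) : Prop := EmbClosure n x = x

/-- The lattice `ℰ^N` of embedded subsets, with the induced order. -/
abbrev Emb (n : ℕ) := {x : XN n // IsEmbedded n x}

lemma modp_le_of_subsingleton {n : ℕ} {A : Set (Fin n)} (h : A.Subsingleton)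
    (Q : Setoid (Fin n)) : modp n A ≤ Q := by
  rw [Setoid.le_def]
  intro x y hxy
  rcases hxy with rfl | ⟨hx, hy⟩
  · exact Q.refl' x
  · obtain rfl := h hx hy
    exact Q.refl' x

lemma modp_eq_bot_of_subsingleton {n : ℕ} {A : Set (Fin n)} (h : A.Subsingleton) :
    modp n A = ⊥ :=
  le_antisymm (modp_le_of_subsingleton h ⊥) bot_le

lemma embedded_empty (n : ℕ) (Q : Setoid (Fin n)) : IsEmbedded n (∅, Q) := by
  unfold IsEmbedded EmbClosure
  refine Prod.ext ?_ ?_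
  · simp
  · simpa using sup_eq_left.mpr (modp_le_of_subsingleton Set.subsingleton_empty Q)

lemma embedded_univ_top (n : ℕ) : IsEmbedded n (Set.univ, ⊤) := by
  unfold IsEmbedded EmbClosure
  refine Prod.ext ?_ ?_
  · ext y
    simp only [Set.mem_setOf_eq, Set.mem_univ, iff_true]
    exact ⟨y, trivial, Setoid.refl' _ y⟩
  · exact sup_eq_left.mpr le_top

lemma embedded_singleton (n : ℕ) (i : Fin n) : IsEmbedded n ({i}, ⊥) := by
  have hb : modp n ({i} : Set (Fin n)) = ⊥ :=
    modp_eq_bot_of_subsingleton Set.subsingleton_singleton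
  unfold IsEmbedded EmbClosure
  refine Prod.ext ?_ ?_
  · ext y
    simp only [Set.mem_setOf_eq, hb, sup_idem, Set.mem_singleton_iff]
    constructor
    · rintro ⟨a, ha, hrel⟩
      subst ha
      have h2 : ((⊥ : Setoid (Fin n)) ⊔ modp n {a}) y a := hrel
      rw [hb, sup_idem] at h2
      exact h2
    · rintro rfl
      exact ⟨y, rfl, Setoid.refl' _ y⟩
  · simp [hb]

/-- The bottom element `(∅, P_⊥)` of `ℰ^N`. -/
def botE (n : ℕ) : Emb n := ⟨(∅, ⊥), embedded_empty n ⊥⟩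

/-- The top element `(N, P^⊤)` of `ℰ^N`. -/
def topE (n : ℕ) : Emb n := ⟨(Set.univ, ⊤), embedded_univ_top n⟩

/-- The atom `({i}, P_⊥)` of `ℰ^N`. -/
def atomS (n : ℕ) (i : Fin n) : Emb n := ⟨({i}, ⊥), embedded_singleton n i⟩

/-- The atom `(∅, [ij])` of `ℰ^N`, where `[ij]` is the atom of the partition lattice
whose unique non-singleton block is the pair `{i, j}`. -/
def atomP (n : ℕ) (i j : Fin n) : Emb n := ⟨(∅, modp n {i, j}), embedded_empty n _⟩

/-- A pair is an atom candidate: of the form `({i},P_⊥)` or `(∅,[ij])` with `i ≠ j`. -/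
def IsAtomPair (n : ℕ) (a : XN n) : Prop :=
  (∃ i : Fin n, a = ({i}, ⊥)) ∨ ∃ i j : Fin n, i ≠ j ∧ a = (∅, modp n {i, j})

/-- The number of blocks `|P|` of a partition. -/
noncomputable def numBlocks {α : Type*} (P : Setoid α) : ℕ := P.classes.ncard

/-- The rank function `r(A,P) = (n − |P|) + min{|A|,1}` of `ℰ^N`. -/
noncomputable def erank (n : ℕ) (x : XN n) : ℕ := (n - numBlocks x.2) + min x.1.ncard 1

/-- The partition `Q^S` of `S` induced by a partition `Q` of `N`. -/
def indPart {n : ℕ} (S : Set (Fin n)) (Q : Setoid (Fin n)) : Setoid S :=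
  Setoid.comap Subtype.val Q

/-- `mu` is the Möbius function of the (finite) poset `α`. -/
def IsMobius {α : Type*} [PartialOrder α] (mu : α → α → ℤ) : Prop :=
  (∀ x, mu x x = 1) ∧
  (∀ x y, ¬x ≤ y → mu x y = 0) ∧
  (∀ x y, x < y → mu x y = -∑ᶠ z ∈ Set.Ico x y, mu x z)

/-!
It suffices to show that `r` rises by exactly one along every covering `x ⋖ y` of `ℰ^N`; the
length of a chain of coverings is then read off by telescoping. For `x < y` there is always a
`z` with `x < z ≤ y` and `r z = r x + 1`, so a covering can only be such a step. Write
`x = (A, P)` and `y = (B, Q)`; the sets of embedded subsets are empty or blocks. If `P = Q`, this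
forces `A = ∅`, and `z = y`. Otherwise `P < Q`, and merging two blocks of `P` that `Q` joins
gives `P < R ≤ Q` with one block fewer; `z` is `(∅, R)` or `(A', R)` with `A'` the `R`-block
containing `A`.
-/

namespace Setoid

variable {α : Type*}

def merge (P : Setoid α) (a b : α) : Setoid α where
  r x y := P x y ∨ ((P x a ∨ P x b) ∧ (P y a ∨ P y b))
  iseqv := by
    refine ⟨fun x => Or.inl (P.refl' x), ?_, ?_⟩
    · rintro x y (h | ⟨hx, hy⟩)
      · exact Or.inl (P.symm' h)
      · exact Or.inr ⟨hy, hx⟩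
    · rintro x y z (h | ⟨hx, hy⟩) (h' | ⟨hy', hz⟩)
      · exact Or.inl (P.trans' h h')
      · exact Or.inr ⟨hy'.imp (P.trans' h) (P.trans' h), hz⟩
      · exact Or.inr ⟨hx, hy.imp (P.trans' (P.symm' h')) (P.trans' (P.symm' h'))⟩
      · exact Or.inr ⟨hx, hz⟩

variable {P Q : Setoid α} {a b : α}

lemma le_merge : P ≤ P.merge a b := fun _ _ => Or.inl

lemma merge_rel : P.merge a b a b := Or.inr ⟨Or.inl (P.refl' a), Or.inr (P.refl' b)⟩

lemma merge_le (hPQ : P ≤ Q) (hab : Q a b) : P.merge a b ≤ Q := by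
  have hQa : ∀ z, P z a ∨ P z b → Q z a := fun z hz =>
    hz.elim (fun h => hPQ h) fun h => Q.trans' (hPQ h) (Q.symm' hab)
  rintro x y (h | ⟨hx, hy⟩)
  · exact hPQ h
  · exact Q.trans' (hQa x hx) (Q.symm' (hQa y hy))

end Setoid

lemma numBlocks_eq_natCard_quotient {α : Type*} (P : Setoid α) :
    numBlocks P = Nat.card (Quotient P) :=
  (Nat.card_congr P.quotientEquivClasses).symm

lemma numBlocks_le_natCard {α : Type*} [Finite α] (P : Setoid α) : numBlocks P ≤ Nat.card α := by
  rw [numBlocks_eq_natCard_quotient]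
  exact Nat.card_le_card_of_surjective _ Quotient.mk_surjective

/-- The quotient map onto the merged partition stays surjective and becomes injective once the
block of `b` is removed. -/
lemma numBlocks_merge {α : Type*} [Finite α] {P : Setoid α} {a b : α} (hab : ¬P a b) :
    numBlocks (P.merge a b) + 1 = numBlocks P := by
  let g : Quotient P → Quotient (P.merge a b) := Quotient.map' id fun _ _ h => Setoid.le_merge h
  let S : Set (Quotient P) := Set.univ \ {⟦b⟧}
  have hinj : Set.InjOn g S := by
    rintro ⟨x⟩ ⟨-, hx⟩ ⟨y⟩ ⟨-, hy⟩ hxy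
    have hxb : ¬P x b := fun h => hx (Quotient.sound h)
    have hyb : ¬P y b := fun h => hy (Quotient.sound h)
    apply Quotient.sound
    rcases Quotient.exact hxy with h | ⟨hxa | hxb', hya | hyb'⟩
    · exact h
    · exact P.trans' hxa (P.symm' hya)
    all_goals contradiction
  have himage : g '' S = Set.univ := by
    refine Set.eq_univ_of_forall fun q => Quotient.inductionOn q fun y => ?_
    by_cases hyb : P y b
    · exact ⟨⟦a⟧, ⟨trivial, fun h => hab (Quotient.exact h)⟩,
        Quotient.sound (Or.inr ⟨Or.inl (P.refl' a), Or.inr hyb⟩)⟩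
    · exact ⟨⟦y⟧, ⟨trivial, fun h => hyb (Quotient.exact h)⟩, rfl⟩
  rw [numBlocks_eq_natCard_quotient, numBlocks_eq_natCard_quotient, ← Set.ncard_univ,
    ← himage, hinj.ncard_image, Set.ncard_sdiff_singleton_add_one (Set.mem_univ _), Set.ncard_univ]

lemma exists_numBlocks_add_one {α : Type*} [Finite α] {P Q : Setoid α} (h : P < Q) :
    ∃ R, P < R ∧ R ≤ Q ∧ numBlocks R + 1 = numBlocks P := by
  obtain ⟨a, b, hQ, hP⟩ : ∃ a b, Q a b ∧ ¬P a b := by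
    simpa [Setoid.le_def] using h.not_ge
  exact ⟨P.merge a b, lt_of_le_of_ne Setoid.le_merge fun hR => hP (hR ▸ Setoid.merge_rel),
    Setoid.merge_le h.le hQ, numBlocks_merge hP⟩

theorem List.IsChain.add_length_eq_add_one {α : Type*} {r : α → α → Prop} {f : α → ℕ}
    (hf : ∀ ⦃a b⦄, r a b → f b = f a + 1) :
    ∀ {l : List α} {x y : α}, l.IsChain r → l.head? = some x → l.getLast? = some y →
      f x + l.length = f y + 1
  | [a], x, y, _, hx, hy => by
    obtain ⟨rfl, rfl⟩ : a = x ∧ a = y := by simp_all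
    rfl
  | a :: b :: l, x, y, hl, hx, hy => by
    obtain rfl : a = x := by simpa using hx
    obtain ⟨hab, hl⟩ := List.isChain_cons_cons.1 hl
    have := add_length_eq_add_one hf hl rfl (List.getLast?_cons_cons ▸ hy)
    simp only [List.length_cons, hf hab] at this ⊢
    omega

section Embedded

variable {n : ℕ}

lemma embClosure_of_modp_le {A : Set (Fin n)} {P : Setoid (Fin n)} (h : modp n A ≤ P) :
    EmbClosure n (A, P) = ({y | ∃ a ∈ A, P y a}, P) := by
  rw [EmbClosure, sup_eq_left.mpr h]

lemma isEmbedded_iff {A : Set (Fin n)} {P : Setoid (Fin n)} :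
    IsEmbedded n (A, P) ↔ A = ∅ ∨ A ∈ P.classes := by
  constructor
  · intro h
    obtain rfl | ⟨a, ha⟩ := A.eq_empty_or_nonempty
    · exact Or.inl rfl
    have hmodp : modp n A ≤ P := sup_eq_left.mp (congrArg Prod.snd h)
    rw [IsEmbedded, embClosure_of_modp_le hmodp] at h
    have hA : {y | ∃ c ∈ A, P y c} = A := congrArg Prod.fst h
    exact Or.inr ⟨a, Set.ext fun y => ⟨fun hy => hmodp (Or.inr ⟨hy, ha⟩),
      fun hy => hA ▸ ⟨a, ha, hy⟩⟩⟩
  · rintro (rfl | ⟨a, rfl⟩)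
    · exact embedded_empty n P
    have h : modp n {x | P x a} ≤ P := by
      rintro x y (rfl | ⟨hx, hy⟩)
      exacts [P.refl' x, P.trans' hx (P.symm' hy)]
    rw [IsEmbedded, embClosure_of_modp_le h]
    exact Prod.ext (Set.ext fun y => ⟨fun ⟨c, hc, hyc⟩ => P.trans' hyc hc,
      fun hy => ⟨a, P.refl' a, hy⟩⟩) rfl

lemma numBlocks_le (P : Setoid (Fin n)) : numBlocks P ≤ n :=
  (numBlocks_le_natCard P).trans_eq (Nat.card_fin n)

lemma erank_empty (P : Setoid (Fin n)) : erank n (∅, P) = n - numBlocks P := by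
  simp [erank]

lemma erank_of_nonempty {A : Set (Fin n)} (hA : A.Nonempty) (P : Setoid (Fin n)) :
    erank n (A, P) = n - numBlocks P + 1 := by
  have : 0 < A.ncard := (Set.ncard_pos A.toFinite).mpr hA
  simp only [erank]
  omega

lemma erank_eq_add_one_of_lt_of_snd_eq {x y : Emb n} (h : x < y) (hP : x.1.2 = y.1.2) :
    erank n y.1 = erank n x.1 + 1 := by
  obtain ⟨⟨A, P⟩, hx⟩ := x
  obtain ⟨⟨B, Q⟩, hy⟩ := y
  obtain rfl : P = Q := hP
  have hAB : A ⊂ B := by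
    simpa [Prod.lt_iff] using h
  have hB : B ∈ P.classes :=
    (isEmbedded_iff.1 hy).resolve_left (Set.nonempty_of_ssubset' hAB).ne_empty
  obtain rfl | hA := isEmbedded_iff.1 hx
  · show erank n (B, P) = erank n (∅, P) + 1
    rw [erank_of_nonempty (Set.empty_ssubset.1 hAB), erank_empty]
  obtain ⟨a, ha⟩ := Setoid.nonempty_of_mem_partition (Setoid.isPartition_classes P) hA
  exact absurd (Setoid.eq_of_mem_classes hA ha hB (hAB.subset ha)) hAB.ne

lemma exists_erank_eq_add_one_of_snd_lt {x y : Emb n} (hxy : x ≤ y) (hP : x.1.2 < y.1.2) :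
    ∃ z : Emb n, x < z ∧ z ≤ y ∧ erank n z.1 = erank n x.1 + 1 := by
  obtain ⟨⟨A, P⟩, hx⟩ := x
  obtain ⟨⟨B, Q⟩, hy⟩ := y
  obtain ⟨hAB, -⟩ : A ⊆ B ∧ P ≤ Q := hxy
  change P < Q at hP
  obtain ⟨R, hPR, hRQ, hR⟩ := exists_numBlocks_add_one hP
  have hPn := numBlocks_le P
  obtain rfl | ⟨a, rfl⟩ := isEmbedded_iff.1 hx
  · refine ⟨⟨(∅, R), embedded_empty n R⟩, Prod.lt_iff.2 (Or.inr ⟨le_rfl, hPR⟩),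
      ⟨Set.empty_subset B, hRQ⟩, ?_⟩
    show erank n (∅, R) = erank n (∅, P) + 1
    rw [erank_empty, erank_empty]
    omega
  have hB : B = {x | Q x a} :=
    Setoid.eq_of_mem_classes ((isEmbedded_iff.1 hy).resolve_left
      (Set.nonempty_of_mem (hAB (P.refl' a))).ne_empty) (hAB (P.refl' a)) (Q.mem_classes a)
      (Q.refl' a)
  refine ⟨⟨({x | R x a}, R), isEmbedded_iff.2 (Or.inr (R.mem_classes a))⟩,
    Prod.lt_iff.2 (Or.inr ⟨fun y hy => hPR.le hy, hPR⟩), ⟨hB ▸ fun y hy => hRQ hy, hRQ⟩, ?_⟩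
  show erank n ({x | R x a}, R) = erank n ({x | P x a}, P) + 1
  rw [erank_of_nonempty (A := {x | R x a}) ⟨a, R.refl' a⟩,
    erank_of_nonempty (A := {x | P x a}) ⟨a, P.refl' a⟩]
  omega

lemma exists_erank_eq_add_one {x y : Emb n} (h : x < y) :
    ∃ z : Emb n, x < z ∧ z ≤ y ∧ erank n z.1 = erank n x.1 + 1 := by
  rcases (h.le.2 : x.1.2 ≤ y.1.2).eq_or_lt with hP | hP
  · exact ⟨y, h, le_rfl, erank_eq_add_one_of_lt_of_snd_eq h hP⟩
  · exact exists_erank_eq_add_one_of_snd_lt h.le hP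

lemma erank_eq_add_one_of_covBy {x y : Emb n} (h : x ⋖ y) : erank n y.1 = erank n x.1 + 1 := by
  obtain ⟨z, hxz, hzy, hz⟩ := exists_erank_eq_add_one h.lt
  obtain rfl : z = y := hzy.eq_of_not_lt (h.2 hxz)
  exact hz

end Embedded

theorem jordan_dedekind_rank_general (n : ℕ) :
    ∀ x y : Emb n, x ≤ y →
      ∀ l : List (Emb n), l.Chain' (· ⋖ ·) → l.head? = some x → l.getLast? = some y →
        l.length = (erank n y.val - erank n x.val) + 1 := by
  intro x y _ l hl hx hy
  have hlen := List.IsChain.add_length_eq_add_one (r := (· ⋖ ·))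
    (fun _ _ => erank_eq_add_one_of_covBy) hl hx hy
  obtain ⟨t, rfl⟩ := List.head?_eq_some_iff.1 hx
  simp only [List.length_cons] at hlen ⊢
  omega

theorem jordan_dedekind_rank (n : ℕ) (hn : 1 ≤ n) :
    ∀ x y : Emb n, x ≤ y →
      ∀ l : List (Emb n), l.Chain' (· ⋖ ·) → l.head? = some x → l.getLast? = some y →
        l.length = (erank n y.val - erank n x.val) + 1 :=
  jordan_dedekind_rank_general n
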